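/- In the admissibility setting, there exists C' > 0 (namely C' = 2Ke^c‖G‖) such that ‖x‖_τ ≤ C'‖T(t,τ)x‖_t for all t ≥ τ and all x ∈ F^u_τ. -/

import Mathlib

open MeasureTheory Set Filter
open scoped ENNReal

/-- The `L^p`-norm of a function `f : ℝ → X` with respect to a family of norms
`N t = ‖·‖_t` on `X` (ess sup when `p = ∞`). -/
noncomputable def famLpNorm {X : Type*} [NormedAddCommGroup X]
    (N : ℝ → X → ℝ) (p : ℝ≥0∞) (f : ℝ → X) : ℝ≥0∞ :=
  if p = ∞ then essSup (fun t => ENNReal.ofReal (N t (f t))) volume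
  else (∫⁻ t, ENNReal.ofReal (N t (f t)) ^ p.toReal) ^ (1 / p.toReal)

/-- Membership in `Y₁ = L^p ∩ C_b` with respect to the family of norms `N`. -/
def MemY1 {X : Type*} [NormedAddCommGroup X]
    (N : ℝ → X → ℝ) (p : ℝ≥0∞) (x : ℝ → X) : Prop :=
  Continuous x ∧ (∃ M, ∀ t, N t (x t) ≤ M) ∧ famLpNorm N p x < ∞

/-- Membership in `Y₂ = L^q` with respect to the family of norms `N`. -/
def MemY2 {X : Type*} [NormedAddCommGroup X]
    (N : ℝ → X → ℝ) (q : ℝ≥0∞) (y : ℝ → X) : Prop :=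
  AEStronglyMeasurable y volume ∧ famLpNorm N q y < ∞

/-- `x` solves the inhomogeneous integral equation
`x t = T t τ (x τ) + ∫_τ^t T t s (y s) ds` associated with the evolutionary family `T`. -/
def SolvesEq {X : Type*} [NormedAddCommGroup X] [NormedSpace ℝ X]
    (T : ℝ → ℝ → X →L[ℝ] X) (x y : ℝ → X) : Prop :=
  ∀ τ t, τ ≤ t → x t = T t τ (x τ) + ∫ s in Ioc τ t, T t s (y s)

/-- The stable set `F^s_τ`: points with forward trajectory bounded in the norms `‖·‖_t`
whose zero-extension lies in `L^p`. -/
def Fs {X : Type*} [NormedAddCommGroup X] [NormedSpace ℝ X]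
    (T : ℝ → ℝ → X →L[ℝ] X) (N : ℝ → X → ℝ) (p : ℝ≥0∞) (τ : ℝ) : Set X :=
  {x | (∃ M, ∀ t, τ ≤ t → N t (T t τ x) ≤ M) ∧
    famLpNorm N p (fun t => if τ ≤ t then T t τ x else 0) < ∞}

/-- The unstable set `F^u_τ`: points admitting a backward trajectory bounded in the norms
`‖·‖_t` whose zero-extension lies in `L^p`. -/
def Fu {X : Type*} [NormedAddCommGroup X] [NormedSpace ℝ X]
    (T : ℝ → ℝ → X →L[ℝ] X) (N : ℝ → X → ℝ) (p : ℝ≥0∞) (τ : ℝ) : Set X :=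
  {x | ∃ φ : ℝ → X, φ τ = x ∧ (∀ s t, s ≤ t → t ≤ τ → φ t = T t s (φ s)) ∧
    (∃ M, ∀ t, t ≤ τ → N t (φ t) ≤ M) ∧
    famLpNorm N p (fun t => if t ≤ τ then φ t else 0) < ∞}

open Topology

/-!
Continue the backward trajectory through `u` forward by the evolution family to an entire
trajectory `w`, and let `ψ` be the piecewise-linear cutoff equal to `1` up to `b` and to `0`
from `b + 1` on. Then `x = ψ w` lies in `L^p ∩ C_b` and solves the inhomogeneous equation with
right-hand side `y = ψ' w`, which is supported in the window `(b, b + 1]`. Admissibility gives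
`‖u‖_τ = ‖x τ‖_τ ≤ normG ‖y‖_q`, and on the window the exponential bound gives
`‖y ξ‖_ξ ≤ K e^{c (ξ - t)} ‖T t τ u‖_t ≤ K e^c ‖T t τ u‖_t`, provided `b = t` when `c ≥ 0`
and `b = t + 1` when `c < 0`.
-/

section FamLpNorm

variable {X : Type*} [NormedAddCommGroup X] {N : ℝ → X → ℝ} {p : ℝ≥0∞}

theorem famLpNorm_eq_eLpNorm (hp : p ≠ 0) (f : ℝ → X) :
    famLpNorm N p f = eLpNorm (fun t => ENNReal.ofReal (N t (f t))) p volume := by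
  unfold famLpNorm
  split_ifs with hp_top
  · simp [hp_top, eLpNorm_exponent_top, eLpNormEssSup]
  · simp [eLpNorm_eq_lintegral_rpow_enorm_toReal hp hp_top]

theorem famLpNorm_le_of_le_indicator (hp : p ≠ 0) {f : ℝ → X} {s : Set ℝ} (hs : volume s ≤ 1)
    {A : ℝ} (hf : ∀ t, N t (f t) ≤ s.indicator (fun _ => A) t) :
    famLpNorm N p f ≤ ENNReal.ofReal A := by
  rw [famLpNorm_eq_eLpNorm hp]
  calc eLpNorm (fun t => ENNReal.ofReal (N t (f t))) p volume
      ≤ eLpNorm (s.indicator fun _ => ENNReal.ofReal A) p volume := by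
        refine eLpNorm_mono_enorm fun t => ?_
        simp only [enorm_eq_self]
        by_cases ht : t ∈ s
        · simpa [ht] using ENNReal.ofReal_le_ofReal (hf t)
        · simpa [ht] using hf t
    _ ≤ ENNReal.ofReal A * volume s ^ (1 / p.toReal) := eLpNorm_indicator_const_le _ _
    _ ≤ ENNReal.ofReal A := mul_le_of_le_one_right' (ENNReal.rpow_le_one hs (by positivity))

theorem famLpNorm_lt_top_of_le_max {f g : ℝ → X} {s : Set ℝ} (hs : MeasurableSet s)
    (hs' : volume s ≠ ∞) {M : ℝ} (hg : famLpNorm N p g < ∞)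
    (hfg : ∀ t, N t (f t) ≤ max (N t (g t)) (s.indicator (fun _ => M) t)) :
    famLpNorm N p f < ∞ := by
  set G : ℝ → ℝ≥0∞ := s.indicator fun _ => ENNReal.ofReal M
  have hfg' : ∀ t, ENNReal.ofReal (N t (f t)) ≤ max (ENNReal.ofReal (N t (g t))) (G t) := by
    intro t
    refine (ENNReal.ofReal_le_ofReal (hfg t)).trans ?_
    by_cases ht : t ∈ s <;> simp [G, ht]
  unfold famLpNorm at hg ⊢
  split_ifs at hg ⊢ with hp_top
  · calc essSup (fun t => ENNReal.ofReal (N t (f t))) volume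
        ≤ essSup ((fun t => ENNReal.ofReal (N t (g t))) + G) volume :=
          essSup_mono_ae <| Eventually.of_forall fun t =>
            (hfg' t).trans (max_le_add_of_nonneg zero_le zero_le)
      _ ≤ essSup (fun t => ENNReal.ofReal (N t (g t))) volume + essSup G volume :=
          ENNReal.essSup_add_le _ _
      _ < ∞ := ENNReal.add_lt_top.2 ⟨hg, (essSup_le_of_ae_le _ (Eventually.of_forall
            (indicator_le_self' fun _ _ => zero_le))).trans_lt ENNReal.ofReal_lt_top⟩
  rcases eq_or_ne p 0 with rfl | hp0
  · simp -- `famLpNorm N 0 f = 1`, since `1 / 0 = 0`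
  have hp : 0 < p.toReal := ENNReal.toReal_pos hp0 hp_top
  refine ENNReal.rpow_lt_top_of_nonneg (by positivity) (ne_of_lt ?_)
  have hG : (fun t => G t ^ p.toReal) = s.indicator fun _ => ENNReal.ofReal M ^ p.toReal := by
    ext t
    by_cases ht : t ∈ s <;> simp [G, ht, ENNReal.zero_rpow_of_pos hp]
  calc ∫⁻ t, ENNReal.ofReal (N t (f t)) ^ p.toReal
      ≤ ∫⁻ t, (ENNReal.ofReal (N t (g t)) ^ p.toReal + G t ^ p.toReal) := by
        refine lintegral_mono fun t => ?_
        calc ENNReal.ofReal (N t (f t)) ^ p.toReal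
            ≤ max (ENNReal.ofReal (N t (g t))) (G t) ^ p.toReal :=
              ENNReal.rpow_le_rpow (hfg' t) hp.le
          _ = max (ENNReal.ofReal (N t (g t)) ^ p.toReal) (G t ^ p.toReal) :=
              (ENNReal.monotone_rpow_of_nonneg hp.le).map_max
          _ ≤ _ := max_le_add_of_nonneg zero_le zero_le
    _ = (∫⁻ t, ENNReal.ofReal (N t (g t)) ^ p.toReal) + ∫⁻ t, G t ^ p.toReal := by
        refine lintegral_add_right _ ?_
        rw [hG]
        exact measurable_const.indicator hs
    _ < ∞ := by
        rw [hG, lintegral_indicator_const hs]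
        refine ENNReal.add_lt_top.2 ⟨(ENNReal.rpow_lt_top_iff_of_pos (by positivity)).1 hg, ?_⟩
        exact ENNReal.mul_lt_top (ENNReal.rpow_lt_top_of_nonneg hp.le ENNReal.ofReal_ne_top)
          hs'.lt_top

end FamLpNorm

section Trajectory

variable {X : Type*} [NormedAddCommGroup X] [NormedSpace ℝ X] (T : ℝ → ℝ → X →L[ℝ] X)

def IsTrajectory (w : ℝ → X) : Prop :=
  ∀ a b, a ≤ b → w b = T b a (w a)

variable {T}

theorem isTrajectory_extend (hCoc : ∀ τ s t, τ ≤ s → s ≤ t → ∀ u, T t s (T s τ u) = T t τ u)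
    {φ : ℝ → X} {τ : ℝ} (hφ : ∀ s t, s ≤ t → t ≤ τ → φ t = T t s (φ s)) :
    IsTrajectory T fun ξ => if ξ ≤ τ then φ ξ else T ξ τ (φ τ) := by
  intro a b hab
  by_cases hb : b ≤ τ
  · simp only [hb, hab.trans hb, if_true]
    exact hφ a b hab hb
  by_cases ha : a ≤ τ
  · simp only [hb, ha, if_true, if_false]
    rw [hφ a τ ha le_rfl, hCoc a τ b ha (not_le.1 hb).le]
  · simp only [hb, ha, if_false]
    rw [hCoc τ a b (not_le.1 ha).le hab]

theorem exists_isTrajectory_of_mem_Fu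
    (hCoc : ∀ τ s t, τ ≤ s → s ≤ t → ∀ u, T t s (T s τ u) = T t τ u)
    {N : ℝ → X → ℝ} {p : ℝ≥0∞} {τ : ℝ} {u : X} (hu : u ∈ Fu T N p τ) :
    ∃ w, IsTrajectory T w ∧ w τ = u ∧ (∃ M, ∀ ξ ≤ τ, N ξ (w ξ) ≤ M) ∧
      famLpNorm N p (fun ξ => if ξ ≤ τ then w ξ else 0) < ∞ := by
  obtain ⟨φ, rfl, hφ, ⟨M, hM⟩, hLp⟩ := hu
  have hφ_past : ∀ ξ ≤ τ, (if ξ ≤ τ then φ ξ else T ξ τ (φ τ)) = φ ξ :=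
    fun ξ hξ => if_pos hξ
  refine ⟨_, isTrajectory_extend hCoc hφ, if_pos le_rfl,
    ⟨M, fun ξ hξ => (hφ_past ξ hξ).symm ▸ hM ξ hξ⟩, ?_⟩
  convert hLp using 3 with ξ
  split_ifs <;> rfl

theorem IsTrajectory.continuous (hCont : ∀ τ (u : X), ContinuousOn (fun t => T t τ u) (Ici τ))
    {w : ℝ → X} (hw : IsTrajectory T w) : Continuous w := by
  refine continuous_iff_continuousAt.2 fun ξ => ?_
  have hnhds : Ici (ξ - 1) ∈ 𝓝 ξ := Ici_mem_nhds (by linarith)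
  refine ((hCont (ξ - 1) (w (ξ - 1))).continuousAt hnhds).congr ?_
  filter_upwards [hnhds] with η hη using (hw _ _ hη).symm

theorem IsTrajectory.solvesEq_smul [CompleteSpace X] {w : ℝ → X} (hw : IsTrajectory T w)
    {ψ ψ' : ℝ → ℝ} (hψ : ∀ a b, a ≤ b → ψ b - ψ a = ∫ s in Ioc a b, ψ' s) :
    SolvesEq T (fun s => ψ s • w s) (fun s => ψ' s • w s) := by
  intro a b hab
  have hint : ∫ s in Ioc a b, T b s (ψ' s • w s) = (∫ s in Ioc a b, ψ' s) • w b := by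
    rw [← integral_smul_const]
    refine setIntegral_congr_fun measurableSet_Ioc fun s hs => ?_
    simp only [map_smul, ← hw s b hs.2]
  rw [hint, map_smul, ← hw a b hab, ← hψ a b hab, ← add_smul, add_sub_cancel]

theorem IsTrajectory.le_exp_abs_mul {N : ℝ → X → ℝ} {K c : ℝ}
    (hBd : ∀ τ t (u : X), τ ≤ t → N t (T t τ u) ≤ K * Real.exp (c * (t - τ)) * N τ u)
    (hK : 0 ≤ K) (hN0 : ∀ t v, 0 ≤ N t v)
    {w : ℝ → X} (hw : IsTrajectory T w) {τ b ξ : ℝ} (hξ : ξ ∈ Ioc τ b) :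
    N ξ (w ξ) ≤ K * Real.exp (|c| * (b - τ)) * N τ (w τ) := by
  rw [hw τ ξ hξ.1.le]
  refine (hBd τ ξ _ hξ.1.le).trans (mul_le_mul_of_nonneg_right
    (mul_le_mul_of_nonneg_left (Real.exp_le_exp.2 ?_) hK) (hN0 _ _))
  exact (mul_le_mul_of_nonneg_right (le_abs_self c) (sub_nonneg.2 hξ.1.le)).trans
    (mul_le_mul_of_nonneg_left (by linarith [hξ.2]) (abs_nonneg c))

theorem IsTrajectory.indicator_smul_le_indicator {N : ℝ → X → ℝ} {K c : ℝ}
    (hBd : ∀ τ t (u : X), τ ≤ t → N t (T t τ u) ≤ K * Real.exp (c * (t - τ)) * N τ u)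
    (hK : 0 ≤ K) (hN0 : ∀ t v, 0 ≤ N t v)
    (hNsmul : ∀ t (r : ℝ) (u : X), N t (r • u) = |r| * N t u) {w : ℝ → X}
    (hw : IsTrajectory T w) {t b : ℝ} (htb : t ≤ b)
    (hb : ∀ ξ ∈ Ioc b (b + 1), c * (ξ - t) ≤ c) (ξ : ℝ) :
    N ξ ((Ioc b (b + 1)).indicator (fun _ => (-1 : ℝ)) ξ • w ξ) ≤
      (Ioc b (b + 1)).indicator (fun _ => K * Real.exp c * N t (w t)) ξ := by
  rw [hNsmul]
  by_cases hξ : ξ ∈ Ioc b (b + 1)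
  · have htξ : t ≤ ξ := htb.trans hξ.1.le
    simp only [indicator_of_mem hξ, abs_neg, abs_one, one_mul]
    rw [hw t ξ htξ]
    exact (hBd t ξ _ htξ).trans (mul_le_mul_of_nonneg_right
      (mul_le_mul_of_nonneg_left (Real.exp_le_exp.2 (hb ξ hξ)) hK) (hN0 _ _))
  · simp [hξ]

end Trajectory

def cutoff (b ξ : ℝ) : ℝ := max 0 (min 1 (b + 1 - ξ))

theorem continuous_cutoff (b : ℝ) : Continuous (cutoff b) := by
  unfold cutoff; fun_prop

theorem abs_cutoff_le_one (b ξ : ℝ) : |cutoff b ξ| ≤ 1 := by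
  unfold cutoff
  rw [abs_of_nonneg (le_max_left _ _)]
  exact max_le zero_le_one (min_le_left _ _)

theorem cutoff_eq_zero (b : ℝ) {ξ : ℝ} (hξ : b + 1 ≤ ξ) : cutoff b ξ = 0 := by
  unfold cutoff
  exact max_eq_left (min_le_of_right_le (by linarith))

theorem cutoff_eq_one (b : ℝ) {ξ : ℝ} (hξ : ξ ≤ b) : cutoff b ξ = 1 := by
  unfold cutoff
  rw [min_eq_left (by linarith), max_eq_right zero_le_one]

theorem cutoff_sub_cutoff (b a a' : ℝ) (ha : a ≤ a') :
    cutoff b a' - cutoff b a =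
      ∫ s in Ioc a a', (Ioc b (b + 1)).indicator (fun _ => -1) s := by
  rw [integral_indicator measurableSet_Ioc]
  simp only [integral_neg, setIntegral_const, smul_eq_mul, mul_one]
  rw [measureReal_restrict_apply measurableSet_Ioc, Ioc_inter_Ioc, Real.volume_real_Ioc]
  unfold cutoff
  simp only [max_def, min_def]
  split_ifs <;> linarith

theorem exists_window_mul_sub_le (c t : ℝ) :
    ∃ b, t ≤ b ∧ ∀ ξ ∈ Ioc b (b + 1), c * (ξ - t) ≤ c := by
  rcases le_or_gt 0 c with hc | hc
  · exact ⟨t, le_rfl, fun ξ hξ => by nlinarith [hξ.2]⟩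
  · exact ⟨t + 1, by linarith, fun ξ hξ => by nlinarith [hξ.1]⟩

theorem memY1_cutoff_smul {X : Type*} [NormedAddCommGroup X] [NormedSpace ℝ X]
    {N : ℝ → X → ℝ} {p : ℝ≥0∞} (hN0 : ∀ t v, 0 ≤ N t v)
    (hNsmul : ∀ t (r : ℝ) (u : X), N t (r • u) = |r| * N t u)
    {w : ℝ → X} (hw : Continuous w) {τ b M M' : ℝ} (hM : ∀ ξ ≤ τ, N ξ (w ξ) ≤ M)
    (hM' : ∀ ξ ∈ Ioc τ (b + 1), N ξ (w ξ) ≤ M')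
    (hLp : famLpNorm N p (fun ξ => if ξ ≤ τ then w ξ else 0) < ∞) :
    MemY1 N p fun ξ => cutoff b ξ • w ξ := by
  have hN00 : ∀ t, N t 0 = 0 := fun t => by simpa using hNsmul t 0 0
  have hle : ∀ ξ, N ξ (cutoff b ξ • w ξ) ≤ N ξ (w ξ) := fun ξ => by
    rw [hNsmul]
    exact mul_le_of_le_one_left (hN0 _ _) (abs_cutoff_le_one b ξ)
  have hdom : ∀ ξ, N ξ (cutoff b ξ • w ξ) ≤
      max (N ξ (if ξ ≤ τ then w ξ else 0)) ((Ioc τ (b + 1)).indicator (fun _ => M') ξ) := by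
    intro ξ
    by_cases hτ : ξ ≤ τ
    · simpa [hτ] using Or.inl (hle ξ)
    by_cases hb : ξ ≤ b + 1
    · have hξ : ξ ∈ Ioc τ (b + 1) := ⟨not_le.1 hτ, hb⟩
      simpa [hξ] using Or.inr ((hle ξ).trans (hM' ξ hξ))
    · simp [hτ, hb, cutoff_eq_zero b (not_le.1 hb).le, hN00]
  refine ⟨(continuous_cutoff b).smul hw, ⟨max M M', fun ξ => (hdom ξ).trans ?_⟩,
    famLpNorm_lt_top_of_le_max measurableSet_Ioc (by simp) hLp hdom⟩
  have hM0 : 0 ≤ M := (hN0 τ (w τ)).trans (hM τ le_rfl)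
  refine max_le ?_ ?_
  · split_ifs with hτ
    · exact le_max_of_le_left (hM ξ hτ)
    · exact le_max_of_le_left (hN00 ξ ▸ hM0)
  · by_cases hξ : ξ ∈ Ioc τ (b + 1)
    · simp [hξ]
    · simp [hξ, hM0]

theorem unstable_lower_bound_general
    {X : Type*} [NormedAddCommGroup X] [NormedSpace ℝ X] [CompleteSpace X]
    (T : ℝ → ℝ → X →L[ℝ] X) (N : ℝ → X → ℝ) (K c normG : ℝ)
    (hN₁ : ∀ t u, ‖u‖ ≤ N t u)
    (hNsmul : ∀ t (r : ℝ) (u : X), N t (r • u) = |r| * N t u)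
    (hCoc : ∀ τ s t, τ ≤ s → s ≤ t → ∀ u, T t s (T s τ u) = T t τ u)
    (hCont : ∀ τ (u : X), ContinuousOn (fun t => T t τ u) (Ici τ))
    (hBd : ∀ τ t (u : X), τ ≤ t → N t (T t τ u) ≤ K * Real.exp (c * (t - τ)) * N τ u)
    (hK : 0 < K)
    (p q : ℝ≥0∞) (hq : 1 ≤ q)
    -- boundedness of the solution operator `G` in the sup-norm:
    (hG : ∀ x y : ℝ → X, MemY1 N p x → MemY2 N q y → SolvesEq T x y →
      ∀ s, N s (x s) ≤ normG * (famLpNorm N q y).toReal) :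
    ∀ τ t (u : X), τ ≤ t → u ∈ Fu T N p τ →
      N τ u ≤ 2 * K * Real.exp c * normG * N t (T t τ u) := by
  intro τ t u hτt hu
  have hN0 : ∀ t v, 0 ≤ N t v := fun t v => (norm_nonneg v).trans (hN₁ t v)
  obtain ⟨w, hw, rfl, ⟨M, hM⟩, hLp⟩ := exists_isTrajectory_of_mem_Fu hCoc hu
  obtain ⟨b, htb, hb⟩ := exists_window_mul_sub_le c t
  have hY1 : MemY1 N p fun ξ => cutoff b ξ • w ξ :=
    memY1_cutoff_smul hN0 hNsmul (hw.continuous hCont) hM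
      (fun ξ hξ => hw.le_exp_abs_mul hBd hK.le hN0 hξ) hLp
  have hyq := famLpNorm_le_of_le_indicator (zero_lt_one.trans_le hq).ne' (by simp)
    (hw.indicator_smul_le_indicator hBd hK.le hN0 hNsmul htb hb)
  have hY2 : MemY2 N q fun ξ => (Ioc b (b + 1)).indicator (fun _ => (-1 : ℝ)) ξ • w ξ :=
    ⟨(measurable_const.indicator measurableSet_Ioc).aestronglyMeasurable.smul
      (hw.continuous hCont).aestronglyMeasurable, hyq.trans_lt ENNReal.ofReal_lt_top⟩
  have hadm := hG _ _ hY1 hY2 (hw.solvesEq_smul (cutoff_sub_cutoff b)) τ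
  simp only [cutoff_eq_one b (hτt.trans htb), one_smul] at hadm
  rw [← hw τ t hτt]
  have hKe : 0 ≤ K * Real.exp c := by positivity
  have hyK := ENNReal.toReal_le_of_le_ofReal (mul_nonneg hKe (hN0 _ _)) hyq
  rcases le_or_gt 0 normG with hG0 | hG0
  · nlinarith [mul_le_mul_of_nonneg_left hyK hG0, mul_nonneg (mul_nonneg hKe hG0) (hN0 t (w t))]
  -- for `normG < 0` admissibility forces `‖u‖_τ = 0`, hence also `‖T t τ u‖_t = 0`
  · have hτ0 : N τ (w τ) = 0 := le_antisymm
      (hadm.trans (mul_nonpos_of_nonpos_of_nonneg hG0.le ENNReal.toReal_nonneg)) (hN0 _ _)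
    have ht0 : N t (w t) = 0 :=
      le_antisymm (by simpa [hτ0, hw τ t hτt] using hBd τ t (w τ) hτt) (hN0 _ _)
    simp [hτ0, ht0]

/-- In the admissibility setting (the solution operator `G` is bounded,
with `‖Gy‖_∞ ≤ normG · ‖y‖_q`), one has
`‖u‖_τ ≤ 2 K e^c normG · ‖T t τ u‖_t` for all `t ≥ τ` and `u ∈ F^u_τ`. -/
theorem unstable_lower_bound
    {X : Type*} [NormedAddCommGroup X] [NormedSpace ℝ X] [CompleteSpace X]
    (T : ℝ → ℝ → X →L[ℝ] X) (N : ℝ → X → ℝ) (C ε K c normG : ℝ)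
    (hN₁ : ∀ t u, ‖u‖ ≤ N t u)
    (hN₂ : ∀ t (u : X), N t u ≤ C * Real.exp (ε * |t|) * ‖u‖)
    (hNadd : ∀ t (u v : X), N t (u + v) ≤ N t u + N t v)
    (hNsmul : ∀ t (r : ℝ) (u : X), N t (r • u) = |r| * N t u)
    (hNmeas : ∀ u : X, Measurable fun t => N t u)
    (hId : ∀ t, T t t = ContinuousLinearMap.id ℝ X)
    (hCoc : ∀ τ s t, τ ≤ s → s ≤ t → ∀ u, T t s (T s τ u) = T t τ u)
    (hCont : ∀ τ (u : X), ContinuousOn (fun t => T t τ u) (Ici τ))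
    (hContB : ∀ τ (u : X), ContinuousOn (fun s => T τ s u) (Iic τ))
    (hBd : ∀ τ t (u : X), τ ≤ t → N t (T t τ u) ≤ K * Real.exp (c * (t - τ)) * N τ u)
    (hK : 0 < K)
    (p q : ℝ≥0∞) (hq : 1 ≤ q) (hpq : q ≤ p)
    -- boundedness of the solution operator `G` in the sup-norm:
    (hG : ∀ x y : ℝ → X, MemY1 N p x → MemY2 N q y → SolvesEq T x y →
      ∀ s, N s (x s) ≤ normG * (famLpNorm N q y).toReal) :
    ∀ τ t (u : X), τ ≤ t → u ∈ Fu T N p τ →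
      N τ u ≤ 2 * K * Real.exp c * normG * N t (T t τ u) :=
  unstable_lower_bound_general T N K c normG hN₁ hNsmul hCoc hCont hBd hK p q hq hG
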